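/- Let $k$ be a field of characteristic $p>3$, $n=2r$. Consider the element $u = \sum_{i=1}^{r} (-1)^{i-1} x_i \prod_{j=1}^{i-1} x_{r+j}^{p-1} \in B_n$ and the element $s = u + \sum_{i=1}^r \lambda_i x_i \prod_{j=1}^r x_{r+j}^{p-1}$ for scalars $\lambda_i \in k$. Then $D_H(s) = \beta\big(\sum_{i=1}^r \big((-1)^{i-1}\prod_{j=1}^{i-1} x_j^{p-1} + \lambda_i \prod_{j=1}^r x_j^{p-1}\big)\partial_i\big)$, i.e., $D_H(s)$ lies in the image of the embedding $\beta: W_r \to \mathrm{Der}(B_n)$. -/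

import Mathlib

open MvPolynomial

set_option synthInstance.maxHeartbeats 1000000
set_option maxHeartbeats 1000000

noncomputable section

variable (k : Type) [Field k] (p n : ℕ)

/-- The ideal `⟨x₁^p, …, xₙ^p⟩` of the polynomial ring. -/
def truncIdeal : Ideal (MvPolynomial (Fin n) k) :=
  Ideal.span (Set.range fun i : Fin n => (X i : MvPolynomial (Fin n) k) ^ p)

/-- The truncated polynomial ring `Bₙ = k[x₁,…,xₙ]/⟨xᵢ^p⟩`. -/
abbrev TruncPoly := MvPolynomial (Fin n) k ⧸ truncIdeal k p n

/-- The canonical projection `k[x]→ Bₙ`, as a `k`-algebra homomorphism. -/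
def Bmk : MvPolynomial (Fin n) k →ₐ[k] TruncPoly k p n :=
  Ideal.Quotient.mkₐ k (truncIdeal k p n)

theorem Bmk_surjective : Function.Surjective (Bmk k p n) :=
  Ideal.Quotient.mkₐ_surjective k _

/-- The class of the variable `xᵢ` in `Bₙ`. -/
def mkX (i : Fin n) : TruncPoly k p n := Bmk k p n (X i)

theorem pderiv_mem [CharP k p] (i : Fin n) {f : MvPolynomial (Fin n) k}
    (hf : f ∈ truncIdeal k p n) : pderiv i f ∈ truncIdeal k p n := by
  induction hf using Submodule.span_induction with
  | mem x hx =>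
      obtain ⟨j, rfl⟩ := hx
      have h0 : (pderiv i) ((X j : MvPolynomial (Fin n) k) ^ p) = 0 := by
        rw [(pderiv i).leibniz_pow]
        have : (p : MvPolynomial (Fin n) k) = 0 := CharP.cast_eq_zero _ p
        rw [nsmul_eq_mul, this, zero_mul]
      rw [h0]; exact Ideal.zero_mem _
  | zero => simpa using Ideal.zero_mem _
  | add x y hx hy ihx ihy => simpa [map_add] using Ideal.add_mem _ ihx ihy
  | smul c x hx ih =>
      rw [smul_eq_mul, (pderiv i).leibniz]
      exact Ideal.add_mem _ (Submodule.smul_mem _ _ ih)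
        (by simpa [smul_eq_mul, mul_comm] using Ideal.mul_mem_left (truncIdeal k p n) _ hx)

/-- The partial derivative `∂ᵢ`, descended to the truncated polynomial ring. -/
def pd [CharP k p] (i : Fin n) : TruncPoly k p n → TruncPoly k p n :=
  fun f => Quotient.liftOn' f (fun g => Bmk k p n (pderiv i g)) (by
    intro a b hab
    have h : a - b ∈ truncIdeal k p n := by
      rwa [Submodule.quotientRel_def] at hab
    have h2 := pderiv_mem k p n i h
    rw [map_sub] at h2
    have : Bmk k p n (pderiv i a) - Bmk k p n (pderiv i b) = 0 := by
      rw [← map_sub]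
      exact (Ideal.Quotient.eq_zero_iff_mem).mpr h2
    exact sub_eq_zero.mp this)

@[simp] theorem pd_mk [CharP k p] (i : Fin n) (g : MvPolynomial (Fin n) k) :
    pd k p n i (Bmk k p n g) = Bmk k p n (pderiv i g) := rfl

/-- `∂ᵢ` as a `k`-derivation of `Bₙ`. -/
def pdD [CharP k p] (i : Fin n) :
    Derivation k (TruncPoly k p n) (TruncPoly k p n) where
  toFun := pd k p n i
  map_add' := by
    intro a b
    obtain ⟨x, rfl⟩ := Bmk_surjective k p n a
    obtain ⟨y, rfl⟩ := Bmk_surjective k p n b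
    show Bmk k p n (pderiv i (x + y)) = Bmk k p n (pderiv i x) + Bmk k p n (pderiv i y)
    rw [map_add, map_add]
  map_smul' := by
    intro c a
    obtain ⟨x, rfl⟩ := Bmk_surjective k p n a
    show Bmk k p n (pderiv i (c • x)) = c • Bmk k p n (pderiv i x)
    rw [(pderiv i).map_smul, map_smul]
  map_one_eq_zero' := by
    show Bmk k p n (pderiv i 1) = 0
    simp
  leibniz' := by
    intro a b
    obtain ⟨x, rfl⟩ := Bmk_surjective k p n a
    obtain ⟨y, rfl⟩ := Bmk_surjective k p n b
    show Bmk k p n (pderiv i (x * y)) =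
      Bmk k p n x * Bmk k p n (pderiv i y) + Bmk k p n y * Bmk k p n (pderiv i x)
    rw [(pderiv i).leibniz]
    simp only [smul_eq_mul, map_add, map_mul]

@[simp] theorem pdD_apply [CharP k p] (i : Fin n) (f : TruncPoly k p n) :
    pdD k p n i f = pd k p n i f := rfl

/-- The maximal ideal `𝔪 = (x₁,…,xₙ)` of `Bₙ`. -/
def mIdeal : Ideal (TruncPoly k p n) := Ideal.span (Set.range (mkX k p n))

/-- Evaluation at the origin `κ : Bₙ → k`. -/
def kappa (hp : 0 < p) : TruncPoly k p n →ₐ[k] k :=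
  Ideal.Quotient.liftₐ (truncIdeal k p n) (aeval (0 : Fin n → k)) (by
    intro a ha
    have h : truncIdeal k p n ≤ RingHom.ker
        (aeval (0 : Fin n → k) : MvPolynomial (Fin n) k →ₐ[k] k).toRingHom := by
      rw [truncIdeal, Ideal.span_le]
      rintro _ ⟨j, rfl⟩
      simp [RingHom.mem_ker, zero_pow hp.ne']
    exact h ha)

variable (r : ℕ)

/-- For `i < r`, the index of `xᵢ` among the `2r` variables. -/
def idx1 (i : Fin r) : Fin (2 * r) := ⟨i, by omega⟩

/-- For `i < r`, the index of `x_{i+r}` among the `2r` variables. -/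
def idx2 (i : Fin r) : Fin (2 * r) := ⟨i + r, by omega⟩

/-- The Hamiltonian derivation `D_H(f) = ∑ᵢ (∂ᵢ(f)∂_{i+r} - ∂_{i+r}(f)∂ᵢ)`. -/
def DH [CharP k p] (f : TruncPoly k p (2 * r)) :
    Derivation k (TruncPoly k p (2 * r)) (TruncPoly k p (2 * r)) :=
  ∑ i : Fin r,
    (pd k p (2 * r) (idx1 r i) f • pdD k p (2 * r) (idx2 r i)
      - pd k p (2 * r) (idx2 r i) f • pdD k p (2 * r) (idx1 r i))

/-- The Poisson bracket `[f,g] = D_H(f)(g)` on `B_{2r}`. -/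
def pbr [CharP k p] (f g : TruncPoly k p (2 * r)) : TruncPoly k p (2 * r) :=
  DH k p r f g

/-- The image `Hₙ' = D_H(Bₙ)` of the Hamiltonian map, as a `k`-subspace of
derivations (it equals the span of the range of the linear map `D_H`). -/
def HnP [CharP k p] :
    Submodule k (Derivation k (TruncPoly k p (2 * r)) (TruncPoly k p (2 * r))) :=
  Submodule.span k (Set.range (DH k p r))

/-- The substitution `x_j ↦ x_{r+j}`, as a map `B_r → B_{2r}`. -/
def shiftHom : TruncPoly k p r →ₐ[k] TruncPoly k p (2 * r) :=
  Ideal.Quotient.liftₐ (truncIdeal k p r)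
    ((Bmk k p (2 * r)).comp (rename (idx2 r))) (by
      intro a ha
      have h : truncIdeal k p r ≤ RingHom.ker
          (((Bmk k p (2 * r)).comp (rename (idx2 r))).toRingHom) := by
        rw [truncIdeal, Ideal.span_le]
        rintro _ ⟨j, rfl⟩
        have : ((Bmk k p (2 * r)).comp (rename (idx2 r))) ((X j : MvPolynomial (Fin r) k) ^ p)
            = Bmk k p (2 * r) ((X (idx2 r j) : MvPolynomial (Fin (2 * r)) k) ^ p) := by
          simp [map_pow]
        simp only [SetLike.mem_coe, RingHom.mem_ker, AlgHom.toRingHom_eq_coe,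
          RingHom.coe_coe]
        rw [this]
        exact Ideal.Quotient.eq_zero_iff_mem.mpr (Ideal.subset_span ⟨idx2 r j, rfl⟩)
      exact h ha)

/-- `θ_r : W_r → B_{2r}`, `∑ fᵢ ∂ᵢ ↦ ∑ xᵢ fᵢ(x_{r+1},…,x_{2r})`. -/
def theta [CharP k p]
    (D : Derivation k (TruncPoly k p r) (TruncPoly k p r)) : TruncPoly k p (2 * r) :=
  ∑ i : Fin r, mkX k p (2 * r) (idx1 r i) * shiftHom k p r (D (mkX k p r i))

/-- `β = D_H ∘ θ_r : W_r → Der(B_{2r})`. -/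
def betaMap [CharP k p]
    (D : Derivation k (TruncPoly k p r) (TruncPoly k p r)) :
    Derivation k (TruncPoly k p (2 * r)) (TruncPoly k p (2 * r)) :=
  DH k p r (theta k p r D)

end


/-! Since `θ_r` only reads the values `D(xᵢ)`, and `(∑ gᵢ ∂ᵢ)(xᵢ) = gᵢ`, we get
`β(∑ gᵢ ∂ᵢ) = D_H(∑ xᵢ gᵢ(x_{r+1},…,x_{2r}))`. The theorem thus reduces to `s = θ_r(∑ gᵢ ∂ᵢ)`,
which is a polynomial identity after renaming the variables of `gᵢ`. -/

theorem pdD_mkX (k : Type) [Field k] (p n : ℕ) [CharP k p] (i j : Fin n) :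
    pdD k p n i (mkX k p n j) = Pi.single (M := fun _ => TruncPoly k p n) i 1 j := by
  rw [pdD_apply, mkX, pd_mk, pderiv_X]
  rcases eq_or_ne j i with rfl | h
  · simp
  · simp [h]

theorem sum_smul_pdD_apply_mkX (k : Type) [Field k] (p n : ℕ) [CharP k p]
    (g : Fin n → TruncPoly k p n) (m : Fin n) :
    (∑ i, g i • pdD k p n i) (mkX k p n m) = g m := by
  rw [← Derivation.coeFnAddMonoidHom_apply, map_sum, Finset.sum_apply]
  simp only [Derivation.coeFnAddMonoidHom_apply, Derivation.smul_apply, pdD_mkX, smul_eq_mul,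
    Pi.single_apply, mul_ite, mul_one, mul_zero, Finset.sum_ite_eq, Finset.mem_univ, if_true]

theorem shiftHom_mk (k : Type) [Field k] (p r : ℕ) (f : MvPolynomial (Fin r) k) :
    shiftHom k p r (Bmk k p r f) = Bmk k p (2 * r) (rename (idx2 r) f) := rfl

theorem theta_sum_smul_pdD (k : Type) [Field k] (p r : ℕ) [CharP k p]
    (g : Fin r → TruncPoly k p r) :
    theta k p r (∑ i, g i • pdD k p r i) =
      ∑ i, mkX k p (2 * r) (idx1 r i) * shiftHom k p r (g i) := by
  simp only [theta, sum_smul_pdD_apply_mkX]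

theorem stmt14_general (k : Type) [Field k] (p r : ℕ) [CharP k p]
    (lam : Fin r → k) :
    DH k p r (Bmk k p (2 * r)
      ((∑ i : Fin r, (-1 : MvPolynomial (Fin (2 * r)) k) ^ (i : ℕ) * X (idx1 r i) *
          ∏ j ∈ Finset.Iio i, X (idx2 r j) ^ (p - 1))
        + ∑ i : Fin r, C (lam i) * X (idx1 r i) * ∏ j : Fin r, X (idx2 r j) ^ (p - 1)))
    = betaMap k p r (∑ i : Fin r,
        Bmk k p r ((-1 : MvPolynomial (Fin r) k) ^ (i : ℕ) *
            (∏ j ∈ Finset.Iio i, X j ^ (p - 1))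
          + C (lam i) * ∏ j : Fin r, X j ^ (p - 1)) • pdD k p r i) := by
  rw [betaMap, theta_sum_smul_pdD]
  congr 1
  simp only [shiftHom_mk, mkX, ← map_mul, ← map_sum, ← Finset.sum_add_distrib]
  congr 1
  refine Finset.sum_congr rfl fun i _ => ?_
  simp only [map_add, map_mul, map_pow, map_neg, map_one, map_prod, rename_X, rename_C]
  ring

/-- STATEMENT 14: for `u = ∑ᵢ (-1)^{i-1} xᵢ ∏_{j<i} x_{r+j}^{p-1}` and
`s = u + ∑ᵢ λᵢ xᵢ ∏_{j=1}^r x_{r+j}^{p-1}`, the Hamiltonian derivation `D_H(s)`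
equals `β(∑ᵢ ((-1)^{i-1} ∏_{j<i} x_j^{p-1} + λᵢ ∏_j x_j^{p-1}) ∂ᵢ)`, hence lies in
the image of `β : W_r → Der(B_{2r})`. -/
theorem stmt14 (k : Type) [Field k] (p r : ℕ) [CharP k p] (hp : 3 < p)
    (lam : Fin r → k) :
    DH k p r (Bmk k p (2 * r)
      ((∑ i : Fin r, (-1 : MvPolynomial (Fin (2 * r)) k) ^ (i : ℕ) * X (idx1 r i) *
          ∏ j ∈ Finset.Iio i, X (idx2 r j) ^ (p - 1))
        + ∑ i : Fin r, C (lam i) * X (idx1 r i) * ∏ j : Fin r, X (idx2 r j) ^ (p - 1)))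
    = betaMap k p r (∑ i : Fin r,
        Bmk k p r ((-1 : MvPolynomial (Fin r) k) ^ (i : ℕ) *
            (∏ j ∈ Finset.Iio i, X j ^ (p - 1))
          + C (lam i) * ∏ j : Fin r, X j ^ (p - 1)) • pdD k p r i) :=
  stmt14_general k p r lam
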